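/- Let λ be an infinite cardinal. There exists a linear order I with a subset I₀ ⊆ I such that I₀ is dense in I (between any two distinct elements of I there is an element of I₀), |I₀| ≤ λ, and |I| > λ. -/

import Mathlib

open Cardinal Set

universe u

/-- for every infinite cardinal `λ` there is a linear order `I`
with a subset `I₀ ⊆ I` which is dense in `I` (between any two distinct
elements of `I` there is an element of `I₀`), `|I₀| ≤ λ` and `|I| > λ`. -/
theorem stmt6 (lam : Cardinal.{u}) (hlam : ℵ₀ ≤ lam) :
    ∃ (I : Type u) (inst : LinearOrder I) (I₀ : Set I),
      (∀ a b : I, inst.lt a b → ∃ d ∈ I₀, inst.le a d ∧ inst.le d b) ∧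
      #↥I₀ ≤ lam ∧ lam < #I := by
  classical
  have hS : lam ∈ {c : Cardinal.{u} | lam < 2 ^ c} := cantor lam
  set μ := sInf {c : Cardinal.{u} | lam < 2 ^ c} with hμdef
  have hμS : lam < 2 ^ μ := csInf_mem ⟨lam, hS⟩
  have hμle : μ ≤ lam := csInf_le' hS
  have hmin : ∀ ν < μ, 2 ^ ν ≤ lam := fun ν hν =>
    le_of_not_gt fun h =>
      ((csInf_le' (show ν ∈ {c : Cardinal.{u} | lam < 2 ^ c} from h)).not_gt hν)
  have hμinf : ℵ₀ ≤ μ := by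
    by_contra h
    push_neg at h
    exact absurd hμS (not_lt.2 ((power_lt_aleph0 (by
      exact_mod_cast nat_lt_aleph0 2) h).le.trans hlam))
  set α := μ.ord.ToType with hα
  set A : α → Set (Lex (α → Bool)) :=
    fun γ => {f | ∀ i : α, γ < i → ofLex f i = false} with hA
  refine ⟨Lex (α → Bool), inferInstance, ⋃ γ, A γ, ?_, ?_, ?_⟩
  · intro a b hab
    obtain ⟨i, hlt, hi⟩ := hab
    refine ⟨toLex (fun j => if j ≤ i then ofLex b j else false),
      mem_iUnion.2 ⟨i, fun j hj => by simp [ofLex_toLex, not_le.2 hj]⟩, ?_, ?_⟩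
    · refine le_of_lt ⟨i, fun j hj => ?_, ?_⟩
      · change a j = if j ≤ i then ofLex b j else false
        rw [if_pos hj.le]
        exact hlt j hj
      · change a i < if i ≤ i then ofLex b i else false
        rw [if_pos le_rfl]
        exact hi
    · rcases eq_or_ne (toLex (fun j => if j ≤ i then ofLex b j else false)) b with he | hne
      · exact he.le
      · have hne' : {j : α | (if j ≤ i then ofLex b j else false) ≠ ofLex b j}.Nonempty := by
          rcases Function.ne_iff.1 hne with ⟨j, hj⟩
          exact ⟨j, hj⟩
        set wf := (IsWellFounded.wf : WellFounded ((· < ·) : α → α → Prop))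
        set j := wf.min _ hne' with hjdef
        have hjmem : (if j ≤ i then ofLex b j else false) ≠ ofLex b j := wf.min_mem _ hne'
        have hjnle : ¬ j ≤ i := fun h => hjmem (by simp [h])
        rw [if_neg hjnle] at hjmem
        refine le_of_lt ⟨j, fun k hk => ?_, ?_⟩
        · exact not_ne_iff.1 fun hne2 => wf.not_lt_min _ hne2 hk
        · change (if j ≤ i then ofLex b j else false) < ofLex b j
          rw [if_neg hjnle]
          revert hjmem
          cases ofLex b j <;> simp
  · refine (mk_iUnion_le _).trans ?_
    have hbound : ∀ γ : α, #(A γ) ≤ lam := by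
      intro γ
      have hinj : #(A γ) ≤ #(↥(Iic γ) → Bool) := by
        refine mk_le_of_injective (f := fun f i => ofLex f.1 i.1) ?_
        rintro ⟨f, hf⟩ ⟨g, hg⟩ heq
        refine Subtype.ext (funext fun k => ?_)
        show ofLex f k = ofLex g k
        rcases le_or_gt k γ with hk | hk
        · exact congrFun heq ⟨k, hk⟩
        · rw [show ofLex f k = false from hf k hk, show ofLex g k = false from hg k hk]
      refine hinj.trans ?_
      have h1 : #(↥(Iic γ)) < μ := by
        have he : (Iic γ : Set α) = Iio γ ∪ {γ} := (Set.Iio_union_right).symm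
        rw [he]
        refine (mk_union_le _ _).trans_lt ?_
        have := mk_Iio_toType_ord_lt γ
        simp only [mk_singleton]
        exact add_lt_of_lt hμinf this (one_lt_aleph0.trans_le hμinf)
      have h2 : #(↥(Iic γ) → Bool) = 2 ^ #(↥(Iic γ)) := by
        rw [mk_arrow, mk_bool]; simp
      rw [h2]
      exact hmin _ h1
    have hsup : ⨆ γ : α, #(A γ) ≤ lam := ciSup_le' hbound
    calc #α * ⨆ γ : α, #(A γ) ≤ lam * lam := by
          refine mul_le_mul' ?_ hsup
          rw [hα, mk_ord_toType]; exact hμle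
      _ = lam := mul_eq_self hlam
  · have : #(Lex (α → Bool)) = 2 ^ μ := by
      rw [show #(Lex (α → Bool)) = #(α → Bool) from rfl, mk_arrow, mk_bool]
      simp [hα]
    rw [this]; exact hμS
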